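/- Let n ≥ 3 and let Ω ⊆ ℝⁿ be bounded with d = 2 sup_{y∈Ω}|y|. Then for all x ∈ ℝⁿ with |x| ≥ d and all y ∈ Ω̄, one has |G(x,y)| ≤ (2ⁿ d / s_n) · |x|^{1−n}, where G(x,y) = S_n(x−y) − S_n(ς(x)−y). -/

import Mathlib

/-- Reflection across the hyperplane `{x_n = 0}` in `ℝⁿ`. -/
noncomputable def reflHyp (n : ℕ) (x : EuclideanSpace ℝ (Fin n)) : EuclideanSpace ℝ (Fin n) :=
  WithLp.toLp 2 (fun i : Fin n => if (i : ℕ) = n - 1 then -x i else x i)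

/-- Fundamental solution of the Laplacian in `ℝⁿ`, with `s` the surface
measure of the unit sphere. -/
noncomputable def fundSol (n : ℕ) (s : ℝ) (x : EuclideanSpace ℝ (Fin n)) : ℝ :=
  if n = 2 then (1 / s) * Real.log ‖x‖
  else ‖x‖ ^ ((2 : ℝ) - n) / (((2 : ℝ) - n) * s)

/-- Dirichlet Green's function of the upper half space. -/
noncomputable def greenG (n : ℕ) (s : ℝ) (x y : EuclideanSpace ℝ (Fin n)) : ℝ :=
  fundSol n s (x - y) - fundSol n s (reflHyp n x - y)

/-!
Since `ς` is a linear isometric involution, `‖ς x - y‖ = ‖x - ς y‖`, so the two distances entering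
`G(x, y)` differ by at most `‖y - ς y‖ ≤ 2‖y‖`, and both are at least `‖x‖ / 2` once
`‖y‖ ≤ d / 2 ≤ ‖x‖ / 2`. The mean value theorem for `t ↦ t ^ (2 - n)` on `[‖x‖ / 2, ∞)` then gives
`|G(x, y)| ≤ 2ⁿ ‖y‖ ‖x‖^(1-n) / s ≤ 2ⁿ d ‖x‖^(1-n) / s`.
-/

open Real

theorem abs_rpow_sub_rpow_le_of_nonpos {p m a b : ℝ} (hp : p ≤ 0) (hm : 0 < m)
    (ha : m ≤ a) (hb : m ≤ b) : |a ^ p - b ^ p| ≤ -p * m ^ (p - 1) * |a - b| := by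
  have hderiv : ∀ t ∈ Set.Ici m, HasDerivWithinAt (fun t : ℝ => t ^ p) (p * t ^ (p - 1))
      (Set.Ici m) t := fun t ht =>
    (hasDerivAt_rpow_const (Or.inl (hm.trans_le ht).ne')).hasDerivWithinAt
  have hbound : ∀ t ∈ Set.Ici m, ‖p * t ^ (p - 1)‖ ≤ -p * m ^ (p - 1) := fun t ht => by
    rw [norm_mul, Real.norm_of_nonpos hp, Real.norm_of_nonneg (by have := hm.trans_le ht; positivity)]
    exact mul_le_mul_of_nonneg_left (rpow_le_rpow_of_nonpos hm ht (by linarith)) (by linarith)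
  exact (convex_Ici m).norm_image_sub_le_of_norm_hasDerivWithin_le hderiv hbound hb ha

theorem reflHyp_sub (n : ℕ) (x y : EuclideanSpace ℝ (Fin n)) :
    reflHyp n (x - y) = reflHyp n x - reflHyp n y := by
  ext i
  simp only [reflHyp, PiLp.toLp_apply, PiLp.sub_apply]
  split_ifs <;> ring

theorem reflHyp_reflHyp (n : ℕ) (x : EuclideanSpace ℝ (Fin n)) : reflHyp n (reflHyp n x) = x := by
  ext i
  simp only [reflHyp, PiLp.toLp_apply]
  split_ifs <;> simp

theorem norm_reflHyp (n : ℕ) (x : EuclideanSpace ℝ (Fin n)) : ‖reflHyp n x‖ = ‖x‖ := by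
  simp only [EuclideanSpace.norm_eq, reflHyp]
  congr 1
  refine Finset.sum_congr rfl fun i _ => ?_
  split_ifs <;> simp

theorem norm_reflHyp_sub (n : ℕ) (x y : EuclideanSpace ℝ (Fin n)) :
    ‖reflHyp n x - y‖ = ‖x - reflHyp n y‖ := by
  rw [← norm_reflHyp n (x - reflHyp n y), reflHyp_sub, reflHyp_reflHyp]

theorem abs_norm_sub_sub_norm_reflHyp_sub_le (n : ℕ) (x y : EuclideanSpace ℝ (Fin n)) :
    |‖x - y‖ - ‖reflHyp n x - y‖| ≤ 2 * ‖y‖ := by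
  rw [norm_reflHyp_sub]
  calc |‖x - y‖ - ‖x - reflHyp n y‖| ≤ ‖(x - y) - (x - reflHyp n y)‖ := abs_norm_sub_norm_le _ _
    _ = ‖reflHyp n y - y‖ := by rw [sub_sub_sub_cancel_left]
    _ ≤ 2 * ‖y‖ := by linarith [norm_sub_le (reflHyp n y) y, norm_reflHyp n y]

theorem fundSol_of_ne_two {n : ℕ} (hn : n ≠ 2) (s : ℝ) (x : EuclideanSpace ℝ (Fin n)) :
    fundSol n s x = ‖x‖ ^ ((2 : ℝ) - n) / (((2 : ℝ) - n) * s) := if_neg hn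

theorem greenG_zero_right (n : ℕ) (s : ℝ) (x : EuclideanSpace ℝ (Fin n)) : greenG n s x 0 = 0 := by
  simp [greenG, fundSol, norm_reflHyp]

theorem abs_greenG_le {n : ℕ} (hn : 3 ≤ n) {s : ℝ} (hs : 0 < s) {x y : EuclideanSpace ℝ (Fin n)}
    (hy : ‖y‖ ≤ ‖x‖ / 2) : |greenG n s x y| ≤ 2 ^ n * ‖y‖ / s * ‖x‖ ^ ((1 : ℝ) - n) := by
  rcases eq_or_ne y 0 with rfl | hy0
  · simp [greenG_zero_right]
  have hm : 0 < ‖x‖ / 2 := by linarith [norm_pos_iff.2 hy0]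
  have hp : (2 : ℝ) - n < 0 := by
    have : (3 : ℝ) ≤ n := by exact_mod_cast hn
    linarith
  have ha : ‖x‖ / 2 ≤ ‖x - y‖ := by linarith [norm_sub_norm_le x y]
  have hb : ‖x‖ / 2 ≤ ‖reflHyp n x - y‖ := by
    linarith [norm_sub_norm_le (reflHyp n x) y, norm_reflHyp n x]
  have hG : greenG n s x y = (‖x - y‖ ^ ((2 : ℝ) - n) - ‖reflHyp n x - y‖ ^ ((2 : ℝ) - n))
      / (((2 : ℝ) - n) * s) := by
    rw [greenG, fundSol_of_ne_two (by omega), fundSol_of_ne_two (by omega), sub_div]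
  have hpow : (‖x‖ / 2) ^ ((2 : ℝ) - n - 1) = 2 ^ (n - 1) * ‖x‖ ^ ((1 : ℝ) - n) := by
    have hexp : (2 : ℝ) - n - 1 = -((n - 1 : ℕ) : ℝ) := by
      push_cast [Nat.cast_sub (by omega : 1 ≤ n)]; ring
    rw [div_rpow (norm_nonneg x) zero_le_two, hexp, rpow_neg zero_le_two, rpow_natCast, ← hexp,
      div_inv_eq_mul, mul_comm, show (2 : ℝ) - n - 1 = 1 - n by ring]
  have hmvt : |‖x - y‖ ^ ((2 : ℝ) - n) - ‖reflHyp n x - y‖ ^ ((2 : ℝ) - n)|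
      ≤ -((2 : ℝ) - n) * (‖x‖ / 2) ^ ((2 : ℝ) - n - 1) * (2 * ‖y‖) := by
    refine (abs_rpow_sub_rpow_le_of_nonpos hp.le hm ha hb).trans ?_
    have := rpow_pos_of_pos hm ((2 : ℝ) - n - 1)
    gcongr
    · nlinarith
    · exact abs_norm_sub_sub_norm_reflHyp_sub_le n x y
  calc |greenG n s x y|
      = |‖x - y‖ ^ ((2 : ℝ) - n) - ‖reflHyp n x - y‖ ^ ((2 : ℝ) - n)| / (-((2 : ℝ) - n) * s) := by
        rw [hG, abs_div, abs_mul, abs_of_neg hp, abs_of_pos hs]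
    _ ≤ -((2 : ℝ) - n) * (‖x‖ / 2) ^ ((2 : ℝ) - n - 1) * (2 * ‖y‖) / (-((2 : ℝ) - n) * s) := by
        gcongr
        exact mul_nonneg (by linarith) hs.le
    _ = 2 ^ n * ‖y‖ / s * ‖x‖ ^ ((1 : ℝ) - n) := by
        rw [hpow, ← pow_sub_one_mul (by omega : n ≠ 0) (2 : ℝ)]
        field_simp [hp.ne]

theorem norm_le_sSup_image_norm_of_mem_closure {E : Type*} [SeminormedAddCommGroup E] {Ω : Set E}
    (hb : Bornology.IsBounded Ω) {y : E} (hy : y ∈ closure Ω) : ‖y‖ ≤ sSup (norm '' Ω) := by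
  have hbdd : BddAbove (norm '' Ω) := by
    obtain ⟨C, hC⟩ := hb.exists_norm_le
    exact ⟨C, Set.forall_mem_image.2 hC⟩
  have hΩ : Ω ⊆ Metric.closedBall 0 (sSup (norm '' Ω)) := fun z hz =>
    mem_closedBall_zero_iff.2 (le_csSup hbdd (Set.mem_image_of_mem _ hz))
  exact mem_closedBall_zero_iff.1 (closure_minimal hΩ Metric.isClosed_closedBall hy)

theorem greenG_decay_dim_ge_three_general (n : ℕ) (hn : 3 ≤ n) (s : ℝ) (hs : 0 < s)
    (Ω : Set (EuclideanSpace ℝ (Fin n)))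
    (hb : Bornology.IsBounded Ω)
    (d : ℝ) (hd : d = 2 * sSup ((fun y : EuclideanSpace ℝ (Fin n) => ‖y‖) '' Ω))
    (x : EuclideanSpace ℝ (Fin n)) (hx : d ≤ ‖x‖)
    (y : EuclideanSpace ℝ (Fin n)) (hy : y ∈ closure Ω) :
    |greenG n s x y| ≤ (2 ^ n * d / s) * ‖x‖ ^ ((1 : ℝ) - n) := by
  have hyd : 2 * ‖y‖ ≤ d := hd ▸ by linarith [norm_le_sSup_image_norm_of_mem_closure hb hy]
  calc |greenG n s x y| ≤ 2 ^ n * ‖y‖ / s * ‖x‖ ^ ((1 : ℝ) - n) := abs_greenG_le hn hs (by linarith)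
    _ ≤ 2 ^ n * d / s * ‖x‖ ^ ((1 : ℝ) - n) := by gcongr; linarith [norm_nonneg y]

/-- Decay of the half-space Green's function in dimension `n ≥ 3`:
`|G(x,y)| ≤ (2ⁿ d / sₙ) |x|^{1−n}` for `|x| ≥ d = 2 sup_{y∈Ω}|y|` and `y ∈ Ω̄`. -/
theorem greenG_decay_dim_ge_three (n : ℕ) (hn : 3 ≤ n) (s : ℝ) (hs : 0 < s)
    (Ω : Set (EuclideanSpace ℝ (Fin n)))
    (hne : Ω.Nonempty) (hb : Bornology.IsBounded Ω)
    (d : ℝ) (hd : d = 2 * sSup ((fun y : EuclideanSpace ℝ (Fin n) => ‖y‖) '' Ω))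
    (x : EuclideanSpace ℝ (Fin n)) (hx : d ≤ ‖x‖)
    (y : EuclideanSpace ℝ (Fin n)) (hy : y ∈ closure Ω) :
    |greenG n s x y| ≤ (2 ^ n * d / s) * ‖x‖ ^ ((1 : ℝ) - n) :=
  greenG_decay_dim_ge_three_general n hn s hs Ω hb d hd x hx y hy
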